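/- For a nondecreasing knot vector with ξ_p ≤ ξ < ξ_{N−p}, the degree-p B-spline basis functions satisfy partition of unity: the sum over all valid i of B_{i,p}(ξ) equals 1. -/

import Mathlib

/-!
Induction on the degree. A degree-`p` B-spline `B i p` vanishes off `[ξ_i, ξ_{i+p+1})`, and the
Cox–de Boor recursion writes `B i (p+1)` as `ω_i B i p + (1 - ω_{i+1}) B (i+1) p` with the linear
weights `ω_i`. Summing over `i` and shifting the index in the second sum, the weights of each `B i p`
add up to `1`; the two boundary terms vanish because `ξ_{p+1} ≤ ξ < ξ_m`. This reduces the sum of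
degree `p + 1` to that of degree `p`, and in degree `0` exactly one indicator is nonzero.
-/

/-- Cox–de Boor recursion for B-spline basis functions, with zero-denominator
terms interpreted as zero. -/
noncomputable def Bspline (k : ℕ → ℝ) : ℕ → ℕ → ℝ → ℝ
  | i, 0, x => if k i ≤ x ∧ x < k (i + 1) then 1 else 0
  | i, p + 1, x =>
      (if k (i + p + 1) = k i then 0
        else (x - k i) / (k (i + p + 1) - k i) * Bspline k i p x) +
      (if k (i + p + 2) = k (i + 1) then 0
        else (k (i + p + 2) - x) / (k (i + p + 2) - k (i + 1)) * Bspline k (i + 1) p x)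

namespace Bspline

variable {k : ℕ → ℝ}

noncomputable def leftWeight (k : ℕ → ℝ) (i p : ℕ) (x : ℝ) : ℝ :=
  if k (i + p + 1) = k i then 0 else (x - k i) / (k (i + p + 1) - k i)

noncomputable def rightWeight (k : ℕ → ℝ) (i p : ℕ) (x : ℝ) : ℝ :=
  if k (i + p + 1) = k i then 0 else (k (i + p + 1) - x) / (k (i + p + 1) - k i)

theorem succ_eq (i p : ℕ) (x : ℝ) :
    Bspline k i (p + 1) x =
      leftWeight k i p x * Bspline k i p x +
        rightWeight k (i + 1) p x * Bspline k (i + 1) p x := by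
  have hi : i + 1 + p + 1 = i + p + 2 := by omega
  simp only [Bspline, leftWeight, rightWeight, hi, ite_mul, zero_mul]

theorem eq_zero_of_lt_or_le (hk : Monotone k) (p i : ℕ) {x : ℝ}
    (hx : x < k i ∨ k (i + p + 1) ≤ x) : Bspline k i p x = 0 := by
  induction p generalizing i with
  | zero =>
    have : ¬(k i ≤ x ∧ x < k (i + 1)) := by
      rintro ⟨hl, hr⟩
      rcases hx with hx | hx <;> linarith
    simp [Bspline, this]
  | succ p ih =>
    have hi : Bspline k i p x = 0 := ih i <| hx.imp_right (hk (by omega)).trans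
    have hi' : Bspline k (i + 1) p x = 0 := by
      refine ih (i + 1) ?_
      rcases hx with hx | hx
      · exact .inl (hx.trans_le (hk (by omega)))
      · exact .inr (by rwa [show i + 1 + p + 1 = i + (p + 1) + 1 by omega])
    rw [succ_eq, hi, hi', mul_zero, mul_zero, add_zero]

theorem leftWeight_add_rightWeight_mul (hk : Monotone k) (i p : ℕ) (x : ℝ) :
    (leftWeight k i p x + rightWeight k i p x) * Bspline k i p x = Bspline k i p x := by
  by_cases hc : k (i + p + 1) = k i
  · -- the support `[ξ_i, ξ_{i+p+1})` is empty
    have hB : Bspline k i p x = 0 :=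
      eq_zero_of_lt_or_le hk p i <| (lt_or_ge x (k i)).imp_right (hc ▸ ·)
    rw [hB, mul_zero]
  · have hd : k (i + p + 1) - k i ≠ 0 := sub_ne_zero.2 hc
    have hsum : leftWeight k i p x + rightWeight k i p x = 1 := by
      rw [leftWeight, rightWeight, if_neg hc, if_neg hc, ← add_div, ← div_self hd]
      ring_nf
    rw [hsum, one_mul]

theorem sum_range_zero (hk : Monotone k) {m : ℕ} {x : ℝ} (h0 : k 0 ≤ x) (hm : x < k m) :
    ∑ i ∈ Finset.range m, Bspline k i 0 x = 1 := by
  induction m with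
  | zero => exact absurd (h0.trans_lt hm) (lt_irrefl _)
  | succ m ih =>
    rw [Finset.sum_range_succ]
    rcases lt_or_ge x (k m) with h | h
    · rw [ih h, eq_zero_of_lt_or_le hk 0 m (.inl h), add_zero]
    · have hlast : Bspline k m 0 x = 1 := if_pos ⟨h, hm⟩
      have hrest : ∑ i ∈ Finset.range m, Bspline k i 0 x = 0 :=
        Finset.sum_eq_zero fun i hi =>
          eq_zero_of_lt_or_le hk 0 i (.inr ((hk (Finset.mem_range.1 hi)).trans h))
      rw [hrest, hlast, zero_add]

theorem sum_range_succ_eq_sum_range (hk : Monotone k) {p m : ℕ} {x : ℝ}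
    (hp : k (p + 1) ≤ x) (hm : x < k m) :
    ∑ i ∈ Finset.range m, Bspline k i (p + 1) x = ∑ i ∈ Finset.range m, Bspline k i p x := by
  set r : ℕ → ℝ := fun i => rightWeight k i p x * Bspline k i p x
  have hr0 : r 0 = 0 := by
    simp only [r, eq_zero_of_lt_or_le hk p 0 (.inr (by simpa using hp)), mul_zero]
  have hrm : r m = 0 := by
    simp only [r, eq_zero_of_lt_or_le hk p m (.inl hm), mul_zero]
  have hshift : ∑ i ∈ Finset.range m, r (i + 1) = ∑ i ∈ Finset.range m, r i := by
    have h := Finset.sum_range_succ' r m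
    rwa [Finset.sum_range_succ, hrm, hr0, add_zero, add_zero, eq_comm] at h
  simp only [succ_eq, Finset.sum_add_distrib]
  rw [hshift, ← Finset.sum_add_distrib]
  exact Finset.sum_congr rfl fun i _ => by
    rw [← add_mul, leftWeight_add_rightWeight_mul hk]

theorem sum_range_eq_one (hk : Monotone k) (p : ℕ) {m : ℕ} {x : ℝ}
    (hp : k p ≤ x) (hm : x < k m) : ∑ i ∈ Finset.range m, Bspline k i p x = 1 := by
  induction p with
  | zero => exact sum_range_zero hk hp hm
  | succ p ih =>
    rw [sum_range_succ_eq_sum_range hk hp hm]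
    exact ih ((hk p.le_succ).trans hp)

end Bspline

/-- Partition of unity for degree-p B-splines: for a nondecreasing knot vector
(ξ₀, …, ξ_N) and ξ_p ≤ ξ < ξ_{N-p}, the sum over valid indices i = 0, …, N-p-1
of B_{i,p}(ξ) equals 1. -/
theorem Bspline_partition_of_unity (k : ℕ → ℝ) (hk : Monotone k) (N p : ℕ)
    (x : ℝ) (hx0 : k p ≤ x) (hxN : x < k (N - p)) :
    ∑ i ∈ Finset.range (N - p), Bspline k i p x = 1 :=
  Bspline.sum_range_eq_one hk p hx0 hxN
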